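/- Let (ε_n)_{n ≥ 1} be an independent sequence of Rademacher random variables and s a real number with s > 1/2. Then the series ∑_{n=1}^∞ ε_n(ω) Λ(n) n^{−s} converges almost surely. -/

import Mathlib

/-! Multiplying independent Rademacher signs by the weights `c n = Λ(n) n^{-s}` gives independent
mean-zero summands with variances `c n ^ 2`, and `∑ c n ^ 2 < ∞` for `s > 1/2` because
`Λ(n) ≤ log n ≤ n^t / t` for every `t > 0`. For such summands (Kolmogorov's one-series theorem)
the partial sums form a martingale bounded in L², hence in L¹, so they converge almost surely by
Doob's martingale convergence theorem. -/

open MeasureTheory ProbabilityTheory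

open Filter Finset Topology
open scoped ENNReal

structure IsRademacher {Ω : Type*} [MeasurableSpace Ω] (e : Ω → ℝ) (μ : Measure Ω) : Prop where
  measurable : Measurable e
  measure_eq_one : μ {ω | e ω = 1} = 1 / 2
  measure_eq_neg_one : μ {ω | e ω = -1} = 1 / 2

namespace IsRademacher

variable {Ω : Type*} [MeasurableSpace Ω] {μ : Measure Ω} [IsProbabilityMeasure μ] {e : Ω → ℝ}

lemma ae_eq_one_or_eq_neg_one (he : IsRademacher e μ) : ∀ᵐ ω ∂μ, e ω = 1 ∨ e ω = -1 := by
  have hB : MeasurableSet {ω | e ω = -1} := he.measurable (measurableSet_singleton _)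
  have hdisj : Disjoint {ω | e ω = 1} {ω | e ω = -1} :=
    Set.disjoint_left.mpr fun ω (h : e ω = 1) (h' : e ω = -1) => by norm_num [h] at h'
  rw [ae_iff_measure_eq (p := fun ω => e ω = 1 ∨ e ω = -1)
      ((he.measurable (measurableSet_singleton 1)).union hB).nullMeasurableSet, Set.ofPred_or,
    measure_union hdisj hB, he.measure_eq_one, he.measure_eq_neg_one, measure_univ,
    ENNReal.add_halves]

lemma integral_eq_zero (he : IsRademacher e μ) : μ[e] = 0 := by
  have hA : MeasurableSet {ω | e ω = 1} := he.measurable (measurableSet_singleton _)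
  have hB : MeasurableSet {ω | e ω = -1} := he.measurable (measurableSet_singleton _)
  have hsplit : e =ᵐ[μ] fun ω => {ω | e ω = 1}.indicator 1 ω - {ω | e ω = -1}.indicator 1 ω := by
    filter_upwards [he.ae_eq_one_or_eq_neg_one] with ω hω
    rcases hω with h | h <;> norm_num [Set.indicator_apply, h]
  rw [integral_congr_ae hsplit, integral_sub ((integrable_const 1).indicator hA)
    ((integrable_const 1).indicator hB), integral_indicator_one hA, integral_indicator_one hB,
    measureReal_def, measureReal_def, he.measure_eq_one, he.measure_eq_neg_one, sub_self]

lemma memLp (he : IsRademacher e μ) (p : ℝ≥0∞) : MemLp e p μ :=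
  MemLp.of_bound he.measurable.aestronglyMeasurable 1 <| by
    filter_upwards [he.ae_eq_one_or_eq_neg_one] with ω hω
    rcases hω with h | h <;> simp [h]

lemma variance_eq_one (he : IsRademacher e μ) : Var[e; μ] = 1 := by
  have hsq : (fun ω => e ω ^ 2) =ᵐ[μ] fun _ => 1 := by
    filter_upwards [he.ae_eq_one_or_eq_neg_one] with ω hω
    rcases hω with h | h <;> simp [h]
  rw [variance_of_integral_eq_zero he.measurable.aemeasurable he.integral_eq_zero,
    integral_congr_ae hsq, integral_const, probReal_univ, one_smul]

end IsRademacher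

lemma eLpNorm_two_eq_ofReal_sqrt_variance {Ω : Type*} [MeasurableSpace Ω] {μ : Measure Ω}
    {X : Ω → ℝ} (hX : MemLp X 2 μ) (h0 : μ[X] = 0) :
    eLpNorm X 2 μ = ENNReal.ofReal √Var[X; μ] := by
  rw [hX.eLpNorm_eq_integral_rpow_norm two_ne_zero ENNReal.ofNat_ne_top,
    variance_of_integral_eq_zero hX.aemeasurable h0, Real.sqrt_eq_rpow, ENNReal.toReal_ofNat]
  norm_num [Real.norm_eq_abs, Real.rpow_two]

namespace ProbabilityTheory.iIndepFun

variable {Ω : Type*} [MeasurableSpace Ω] {μ : Measure Ω} {X : ℕ → Ω → ℝ}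

lemma martingale_sum_range_succ (hind : iIndepFun X μ) (hsm : ∀ n, StronglyMeasurable (X n))
    (hint : ∀ n, Integrable (X n) μ) (hmean : ∀ n, μ[X n] = 0) :
    Martingale (fun n => ∑ k ∈ range (n + 1), X k) (Filtration.natural X hsm) μ := by
  have := hind.isProbabilityMeasure
  refine martingale_of_condExp_sub_eq_zero_nat (fun n => ?_)
    (fun n => integrable_finsetSum' _ fun k _ => hint k) (fun n => ?_)
  · exact Finset.stronglyMeasurable_sum _ fun k hk =>
      (Filtration.stronglyAdapted_natural hsm k).mono
        (Filtration.mono _ (Finset.mem_range_succ_iff.mp hk))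
  · rw [Finset.sum_range_succ _ (n + 1), add_sub_cancel_left]
    exact (hind.condExp_natural_ae_eq_of_lt hsm n.lt_succ_self).trans (by rw [hmean]; rfl)

lemma variance_sum_le_tsum (hind : iIndepFun X μ) (hL2 : ∀ n, MemLp (X n) 2 μ)
    (hvar : Summable fun n => Var[X n; μ]) (s : Finset ℕ) :
    Var[∑ k ∈ s, X k; μ] ≤ ∑' n, Var[X n; μ] := by
  rw [IndepFun.variance_sum (fun k _ => hL2 k) (fun k _ l _ hkl => hind.indepFun hkl)]
  exact hvar.sum_le_tsum _ fun k _ => variance_nonneg _ _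

theorem ae_exists_tendsto_sum_range (hind : iIndepFun X μ) (hmeas : ∀ n, Measurable (X n))
    (hL2 : ∀ n, MemLp (X n) 2 μ) (hmean : ∀ n, μ[X n] = 0)
    (hvar : Summable fun n => Var[X n; μ]) :
    ∀ᵐ ω ∂μ, ∃ L, Tendsto (fun N => ∑ n ∈ range N, X n ω) atTop (𝓝 L) := by
  have := hind.isProbabilityMeasure
  set S : ℕ → Ω → ℝ := fun n => ∑ k ∈ range (n + 1), X k
  have hS_L2 : ∀ n, MemLp (S n) 2 μ := fun n => memLp_finsetSum' _ fun k _ => hL2 k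
  have hS_mean : ∀ n, μ[S n] = 0 := fun n => by
    simp only [S, Finset.sum_apply]
    rw [integral_finsetSum _ fun k _ => (hL2 k).integrable one_le_two]
    exact Finset.sum_eq_zero fun k _ => hmean k
  have hS_bdd : ∀ n, eLpNorm (S n) 1 μ ≤ (√(∑' n, Var[X n; μ])).toNNReal := fun n =>
    calc eLpNorm (S n) 1 μ ≤ eLpNorm (S n) 2 μ :=
          eLpNorm_le_eLpNorm_of_exponent_le one_le_two (hS_L2 n).aestronglyMeasurable
      _ = ENNReal.ofReal √Var[S n; μ] := eLpNorm_two_eq_ofReal_sqrt_variance (hS_L2 n) (hS_mean n)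
      _ ≤ ENNReal.ofReal √(∑' n, Var[X n; μ]) := by
          gcongr; exact hind.variance_sum_le_tsum hL2 hvar _
  have hmart := hind.martingale_sum_range_succ (fun n => (hmeas n).stronglyMeasurable)
    (fun n => (hL2 n).integrable one_le_two) hmean
  filter_upwards [hmart.submartingale.exists_ae_tendsto_of_bdd hS_bdd] with ω ⟨L, hL⟩
  exact ⟨L, (tendsto_add_atTop_iff_nat 1).mp (by simpa [S, Finset.sum_apply] using hL)⟩

end ProbabilityTheory.iIndepFun

lemma summable_sq_vonMangoldt_mul_rpow_neg {s : ℝ} (hs : 1 / 2 < s) :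
    Summable fun n : ℕ => (ArithmeticFunction.vonMangoldt n * (n : ℝ) ^ (-s)) ^ 2 := by
  set t : ℝ := (s - 1 / 2) / 2
  have ht : 0 < t := by simp only [t]; linarith
  have hexp : 2 * (t - s) < -1 := by simp only [t]; linarith
  have hbound : ∀ n : ℕ, (ArithmeticFunction.vonMangoldt n * (n : ℝ) ^ (-s)) ^ 2
      ≤ (1 / t) ^ 2 * (n : ℝ) ^ (2 * (t - s)) := fun n => by
    have hΛ : ArithmeticFunction.vonMangoldt n ≤ (n : ℝ) ^ t / t :=
      ArithmeticFunction.vonMangoldt_le_log.trans (Real.log_le_rpow_div n.cast_nonneg ht)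
    calc (ArithmeticFunction.vonMangoldt n * (n : ℝ) ^ (-s)) ^ 2
        ≤ ((n : ℝ) ^ t / t * (n : ℝ) ^ (-s)) ^ 2 := by gcongr
      _ = (1 / t) ^ 2 * (n : ℝ) ^ (2 * (t - s)) := by
          rw [mul_comm (_ / t), mul_div_assoc', ← Real.rpow_add' n.cast_nonneg (by linarith),
            div_pow, ← Real.rpow_mul_natCast n.cast_nonneg]
          ring_nf
  exact Summable.of_nonneg_of_le (fun n => sq_nonneg _) hbound
    ((Real.summable_nat_rpow.mpr hexp).mul_left _)

/-- For s > 1/2, ∑ ε_n(ω) Λ(n) n^{-s} converges almost surely. -/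
theorem random_vonMangoldt_series_converges_ae {Ω : Type*} [MeasurableSpace Ω]
    (μ : Measure Ω) [IsProbabilityMeasure μ]
    (ε : ℕ → Ω → ℝ)
    (hmeas : ∀ n, Measurable (ε n))
    (h1 : ∀ n, μ {ω | ε n ω = 1} = 1/2)
    (h2 : ∀ n, μ {ω | ε n ω = -1} = 1/2)
    (hind : iIndepFun ε μ)
    (s : ℝ) (hs : 1/2 < s) :
    ∀ᵐ ω ∂μ, ∃ L : ℝ, Filter.Tendsto
      (fun N => ∑ n ∈ Finset.range N,
        ε n ω * ArithmeticFunction.vonMangoldt n * (n : ℝ) ^ (-s))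
      Filter.atTop (nhds L) := by
  set c : ℕ → ℝ := fun n => ArithmeticFunction.vonMangoldt n * (n : ℝ) ^ (-s)
  have hrad : ∀ n, IsRademacher (ε n) μ := fun n => ⟨hmeas n, h1 n, h2 n⟩
  have hX : iIndepFun (fun n ω => ε n ω * c n) μ :=
    hind.comp (fun n x => x * c n) fun n => measurable_mul_const _
  have hvar : Summable fun n => Var[fun ω => ε n ω * c n; μ] := by
    simpa [variance_mul_const, (hrad _).variance_eq_one]
      using summable_sq_vonMangoldt_mul_rpow_neg hs
  filter_upwards [hX.ae_exists_tendsto_sum_range (fun n => (hmeas n).mul_const _)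
    (fun n => ((hrad n).memLp 2).mul_const _)
    (fun n => by rw [integral_mul_const, (hrad n).integral_eq_zero, zero_mul]) hvar]
    with ω ⟨L, hL⟩
  exact ⟨L, by simpa only [c, mul_assoc] using hL⟩
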